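/- The min-max invariance penalty min_h max_g E[(h(Z)-T)^2 - (g(Z,Y)-T)^2] equals E[Var(T|Z)] - E[Var(T|Z,Y)] when both optima are attained, and this value is zero if and only if E[T|Z] = E[T|Z,Y] almost surely. -/

import Mathlib

/-!
For `m`-measurable square-integrable `f`, the conditional expectation `μ[T|m]` is the orthogonal
projection of `T` onto the `m`-measurable functions in `L²`, so
`E[(f - T)²] = E[(f - μ[T|m])²] + E[(T - μ[T|m])²]`. Hence both risks are minimised exactly at
the conditional expectations, the inner supremum and the outer infimum are attained there, and the
penalty is `E[(T - E[T|Z])²] - E[(T - E[T|Z,Y])²]`. Since `E[T|Z]` is itself `σ(Z,Y)`-measurable,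
the same identity rewrites this difference as `E[(E[T|Z] - E[T|Z,Y])²]`, which vanishes exactly
when the two conditional expectations agree almost surely.
-/

open MeasureTheory

section ConditionalExpectationL2

variable {Ω : Type*} {m mΩ : MeasurableSpace Ω} {μ : Measure Ω} [IsFiniteMeasure μ]
  {T f : Ω → ℝ}

lemma integral_mul_sub_condExp_eq_zero (hm : m ≤ mΩ) (hT : MemLp T 2 μ) (hf : MemLp f 2 μ)
    (hfm : StronglyMeasurable[m] f) :
    ∫ ω, f ω * (T ω - μ[T|m] ω) ∂μ = 0 := by
  have hfT : Integrable (f * T) μ := hf.integrable_mul hT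
  have hfc : Integrable (f * μ[T|m]) μ := hf.integrable_mul (hT.condExp one_le_two)
  calc ∫ ω, f ω * (T ω - μ[T|m] ω) ∂μ
      = ∫ ω, (f * T) ω ∂μ - ∫ ω, (f * μ[T|m]) ω ∂μ := by
        simp only [mul_sub]; exact integral_sub hfT hfc
    _ = ∫ ω, μ[f * T|m] ω ∂μ - ∫ ω, (f * μ[T|m]) ω ∂μ := by rw [integral_condExp hm]
    _ = 0 := by
        rw [integral_congr_ae (condExp_mul_of_stronglyMeasurable_left hfm hfT
          (hT.integrable one_le_two)), sub_self]

lemma integral_sq_sub_eq_add_integral_sq_sub_condExp (hm : m ≤ mΩ) (hT : MemLp T 2 μ)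
    (hf : MemLp f 2 μ) (hfm : StronglyMeasurable[m] f) :
    ∫ ω, (f ω - T ω) ^ 2 ∂μ
      = ∫ ω, (f ω - μ[T|m] ω) ^ 2 ∂μ + ∫ ω, (T ω - μ[T|m] ω) ^ 2 ∂μ := by
  set c := μ[T|m]
  have hc : MemLp c 2 μ := hT.condExp one_le_two
  have hfc : MemLp (fun ω => f ω - c ω) 2 μ := hf.sub hc
  have hTc : MemLp (fun ω => T ω - c ω) 2 μ := hT.sub hc
  have hprod : Integrable (fun ω => (f ω - c ω) * (T ω - c ω)) μ := hfc.integrable_mul hTc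
  have hcross : ∫ ω, (f ω - c ω) * (T ω - c ω) ∂μ = 0 :=
    integral_mul_sub_condExp_eq_zero hm hT hfc (hfm.sub stronglyMeasurable_condExp)
  calc ∫ ω, (f ω - T ω) ^ 2 ∂μ
      = ∫ ω, ((f ω - c ω) ^ 2 - 2 * ((f ω - c ω) * (T ω - c ω)) + (T ω - c ω) ^ 2) ∂μ :=
        integral_congr_ae (.of_forall fun ω => by ring)
    _ = ∫ ω, (f ω - c ω) ^ 2 ∂μ - 2 * ∫ ω, (f ω - c ω) * (T ω - c ω) ∂μ
          + ∫ ω, (T ω - c ω) ^ 2 ∂μ := by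
        have hleft :
            Integrable (fun ω => (f ω - c ω) ^ 2 - 2 * ((f ω - c ω) * (T ω - c ω))) μ :=
          hfc.integrable_sq.sub (hprod.const_mul 2)
        rw [integral_add hleft hTc.integrable_sq,
          integral_sub hfc.integrable_sq (hprod.const_mul 2), integral_const_mul]
    _ = ∫ ω, (f ω - c ω) ^ 2 ∂μ + ∫ ω, (T ω - c ω) ^ 2 ∂μ := by rw [hcross]; ring

lemma integral_sq_sub_condExp_le (hm : m ≤ mΩ) (hT : MemLp T 2 μ) (hf : MemLp f 2 μ)
    (hfm : StronglyMeasurable[m] f) :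
    ∫ ω, (T ω - μ[T|m] ω) ^ 2 ∂μ ≤ ∫ ω, (f ω - T ω) ^ 2 ∂μ := by
  rw [integral_sq_sub_eq_add_integral_sq_sub_condExp hm hT hf hfm]
  exact le_add_of_nonneg_left (integral_nonneg fun ω => sq_nonneg _)

lemma isLeast_integral_sq_sub_condExp {ι : Type*} (hm : m ≤ mΩ) (hT : MemLp T 2 μ)
    (F : ι → Ω → ℝ) (hF : ∀ i, MemLp (F i) 2 μ ∧ StronglyMeasurable[m] (F i))
    (hopt : ∃ i, F i =ᵐ[μ] μ[T|m]) :
    IsLeast (Set.range fun i => ∫ ω, (F i ω - T ω) ^ 2 ∂μ)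
      (∫ ω, (T ω - μ[T|m] ω) ^ 2 ∂μ) := by
  obtain ⟨i₀, hi₀⟩ := hopt
  refine ⟨⟨i₀, integral_congr_ae ?_⟩, ?_⟩
  · filter_upwards [hi₀] with ω hω
    rw [hω, sub_sq_comm]
  · rintro _ ⟨i, rfl⟩
    exact integral_sq_sub_condExp_le hm hT (hF i).1 (hF i).2

lemma integral_sq_sub_condExp_sub_eq {m₁ m₂ : MeasurableSpace Ω} (h₁₂ : m₁ ≤ m₂)
    (h₂ : m₂ ≤ mΩ) (hT : MemLp T 2 μ) :
    ∫ ω, (T ω - μ[T|m₁] ω) ^ 2 ∂μ - ∫ ω, (T ω - μ[T|m₂] ω) ^ 2 ∂μ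
      = ∫ ω, (μ[T|m₁] ω - μ[T|m₂] ω) ^ 2 ∂μ := by
  have h := integral_sq_sub_eq_add_integral_sq_sub_condExp h₂ hT (hT.condExp one_le_two)
    (stronglyMeasurable_condExp.mono h₁₂)
  simp only [sub_sq_comm (μ[T|m₁] _) (T _)] at h
  rw [h, add_sub_cancel_right]

end ConditionalExpectationL2

lemma integral_sq_sub_eq_zero_iff {Ω : Type*} [MeasurableSpace Ω] {μ : Measure Ω}
    {f g : Ω → ℝ} (hf : MemLp f 2 μ) (hg : MemLp g 2 μ) :
    ∫ ω, (f ω - g ω) ^ 2 ∂μ = 0 ↔ f =ᵐ[μ] g := by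
  have hint : Integrable (fun ω => (f ω - g ω) ^ 2) μ := (hf.sub hg).integrable_sq
  rw [integral_eq_zero_iff_of_nonneg (fun ω => sq_nonneg _) hint]
  refine ⟨fun h => ?_, fun h => ?_⟩ <;> filter_upwards [h] with ω hω
  · exact sub_eq_zero.mp (pow_eq_zero_iff two_ne_zero |>.mp hω)
  · simp [hω]

lemma iInf_iSup_sub_eq_of_isLeast {ι κ : Type*} {A : ι → ℝ} {B : κ → ℝ} {a b : ℝ}
    (hA : IsLeast (Set.range A) a) (hB : IsLeast (Set.range B) b) :
    ⨅ i, ⨆ k, (A i - B k) = a - b := by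
  obtain ⟨⟨i₀, hi₀⟩, hA⟩ := hA
  obtain ⟨⟨k₀, hk₀⟩, hB⟩ := hB
  have : Nonempty ι := ⟨i₀⟩
  have : Nonempty κ := ⟨k₀⟩
  have hsup : ∀ i, ⨆ k, (A i - B k) = A i - b := fun i =>
    IsLUB.ciSup_eq (IsGreatest.isLUB ⟨⟨k₀, by simp only [hk₀]⟩, by
      rintro _ ⟨k, rfl⟩; linarith [hB ⟨k, rfl⟩]⟩)
  simp only [hsup]
  exact IsGLB.ciInf_eq (IsLeast.isGLB ⟨⟨i₀, by simp only [hi₀]⟩, by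
    rintro _ ⟨i, rfl⟩; linarith [hA ⟨i, rfl⟩]⟩)

/-- The min-max invariance penalty `min_h max_g E[(h(Z)-T)^2 - (g(Z,Y)-T)^2]`, over classes
`H` (containing the Bayes regressor `z ↦ E[T|Z=z]`) and `G` (containing
`(z,y) ↦ E[T|Z=z,Y=y]`) of measurable square-integrable predictors, equals
`E[Var(T|Z)] - E[Var(T|Z,Y)]` (with `E[Var(T|·)] = E[(T - E[T|·])^2]`), and this value is
zero if and only if `E[T|Z] = E[T|Z,Y]` almost surely. -/
theorem cil_minmax_penalty
    {Ω γ δ : Type*} [MeasurableSpace Ω] [MeasurableSpace γ] [MeasurableSpace δ]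
    (μ : Measure Ω) [IsProbabilityMeasure μ]
    (Z : Ω → γ) (hZ : Measurable Z) (Y : Ω → δ) (hY : Measurable Y)
    (T : Ω → ℝ) (hT : MemLp T 2 μ)
    (H : Set (γ → ℝ)) (G : Set (γ × δ → ℝ))
    (hHmeas : ∀ h ∈ H, Measurable h ∧ MemLp (fun ω => h (Z ω)) 2 μ)
    (hGmeas : ∀ g ∈ G, Measurable g ∧ MemLp (fun ω => g (Z ω, Y ω)) 2 μ)
    (hHstar : ∃ h ∈ H, (fun ω => h (Z ω)) =ᵐ[μ] μ[T | MeasurableSpace.comap Z inferInstance])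
    (hGstar : ∃ g ∈ G, (fun ω => g (Z ω, Y ω))
      =ᵐ[μ] μ[T | MeasurableSpace.comap (fun ω => (Z ω, Y ω)) inferInstance]) :
    (⨅ h : H, ⨆ g : G,
        (∫ ω, ((h : γ → ℝ) (Z ω) - T ω) ^ 2 ∂μ
          - ∫ ω, ((g : γ × δ → ℝ) (Z ω, Y ω) - T ω) ^ 2 ∂μ)
      = (∫ ω, (T ω - (μ[T | MeasurableSpace.comap Z inferInstance]) ω) ^ 2 ∂μ)
        - ∫ ω, (T ω - (μ[T | MeasurableSpace.comap (fun ω => (Z ω, Y ω)) inferInstance]) ω) ^ 2 ∂μ)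
    ∧ ((⨅ h : H, ⨆ g : G,
        (∫ ω, ((h : γ → ℝ) (Z ω) - T ω) ^ 2 ∂μ
          - ∫ ω, ((g : γ × δ → ℝ) (Z ω, Y ω) - T ω) ^ 2 ∂μ)) = 0
      ↔ (μ[T | MeasurableSpace.comap Z inferInstance]
          =ᵐ[μ] μ[T | MeasurableSpace.comap (fun ω => (Z ω, Y ω)) inferInstance])) := by
  have hmZ := hZ.comap_le
  have hmZY := (hZ.prodMk hY).comap_le
  have hZ_le_ZY : MeasurableSpace.comap Z inferInstance
      ≤ MeasurableSpace.comap (fun ω => (Z ω, Y ω)) inferInstance :=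
    (measurable_fst.comp (comap_measurable (fun ω => (Z ω, Y ω)))).comap_le
  obtain ⟨h₀, hh₀, hh₀_opt⟩ := hHstar
  obtain ⟨g₀, hg₀, hg₀_opt⟩ := hGstar
  have hH := isLeast_integral_sq_sub_condExp hmZ hT (fun (h : H) ω => (h : γ → ℝ) (Z ω))
    (fun ⟨h, hh⟩ => ⟨(hHmeas h hh).2,
      ((hHmeas h hh).1.comp (comap_measurable Z)).stronglyMeasurable⟩)
    ⟨⟨h₀, hh₀⟩, hh₀_opt⟩
  have hG := isLeast_integral_sq_sub_condExp hmZY hT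
    (fun (g : G) ω => (g : γ × δ → ℝ) (Z ω, Y ω))
    (fun ⟨g, hg⟩ => ⟨(hGmeas g hg).2,
      ((hGmeas g hg).1.comp (comap_measurable _)).stronglyMeasurable⟩)
    ⟨⟨g₀, hg₀⟩, hg₀_opt⟩
  have hval := iInf_iSup_sub_eq_of_isLeast hH hG
  refine ⟨hval, ?_⟩
  rw [hval, integral_sq_sub_condExp_sub_eq hZ_le_ZY hmZY hT,
    integral_sq_sub_eq_zero_iff (hT.condExp one_le_two) (hT.condExp one_le_two)]
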